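/- Let d ≥ 2, let X be a sequence of d−1 points of ℝ^d, and let s, t ∈ ℝ^d be such that S := X∘s and T := X∘t satisfy ⟦S⟧ ≠ 0 and ⟦T⟧ ≠ 0. The creasing on X is independent of the choice of the point completing S: if s' ∈ ℝ^d lies on the hyperplane h(S) (equivalently [S∘s'] = 0) and ⟦X∘s'⟧ ≠ 0, then (z_T(π(s')) − z_S(π(s')))/⟦X∘s'⟧ = (z_T(π(s)) − z_S(π(s)))/⟦S⟧. -/

import Mathlib

/-- `[S]`: determinant of the k×k matrix whose columns are the points of `S`
with an appended final entry 1. -/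
noncomputable def mdet {k : ℕ} (S : Fin k → (Fin (k - 1) → ℝ)) : ℝ :=
  Matrix.det (Matrix.of (fun i j : Fin k =>
    if h : (i : ℕ) < k - 1 then S j ⟨i, h⟩ else 1))

/-- `π`: deletion of the last coordinate. -/
def projZ {d : ℕ} (p : Fin d → ℝ) : Fin (d - 1) → ℝ :=
  fun i => p (Fin.castLE (Nat.sub_le d 1) i)

/-- `⟦S⟧ = [π(S)]` for a sequence of d points of ℝ^d. -/
noncomputable def pdet {d : ℕ} (S : Fin d → (Fin d → ℝ)) : ℝ :=
  mdet (fun i => projZ (S i))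

/-- last ('z') coordinate of a point of ℝ^d. -/
def zc {d : ℕ} (q : Fin d → ℝ) : ℝ :=
  if h : 0 < d then q ⟨d - 1, by omega⟩ else 0

/-- `(p, z)`: point of ℝ^d obtained from `p ∈ ℝ^{d-1}` by appending `z`. -/
def liftPt {d : ℕ} (p : Fin (d - 1) → ℝ) (z : ℝ) : Fin d → ℝ :=
  fun i => if h : (i : ℕ) < d - 1 then p ⟨i, h⟩ else z

/-- concatenation `X ∘ s` of a sequence of `k-1` points with one more point. -/
def snoc' {α : Type*} {k : ℕ} (X : Fin (k - 1) → α) (s : α) : Fin k → α :=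
  fun i => if h : (i : ℕ) < k - 1 then X ⟨i, h⟩ else s

/-! Both `p ↦ z_T(p) - z_S(p)` and `p ↦ [π(X) ∘ p]` are affine functions on `ℝ^{d-1}` vanishing
at the `d - 1` points of `π(X)`. Applying the homogenization of the first one to Cramer's rule for
the matrix with rows `(π(X), π(s))` (each with an appended `1`) shows that the two functions are
proportional, so their quotient is the same at `π(s')` as at `π(s)`. -/

open Matrix

theorem snoc'_castLE {α : Type*} {k : ℕ} (X : Fin (k - 1) → α) (s : α) (j : Fin (k - 1)) :
    snoc' X s (Fin.castLE (Nat.sub_le k 1) j) = X j := by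
  simp [snoc']

theorem snoc'_last {α : Type*} {k : ℕ} (X : Fin (k - 1) → α) (s : α) (h : k - 1 < k) :
    snoc' X s ⟨k - 1, h⟩ = s := by
  simp [snoc']

theorem snoc'_of_ne_last {α : Type*} {k : ℕ} (X : Fin (k - 1) → α) (s : α) {j : Fin k}
    (hj : (j : ℕ) ≠ k - 1) : snoc' X s j = X ⟨j, by omega⟩ := by
  simp [snoc', show (j : ℕ) < k - 1 by omega]

theorem comp_snoc' {α β : Type*} {k : ℕ} (g : α → β) (X : Fin (k - 1) → α) (s : α) :
    g ∘ snoc' X s = snoc' (g ∘ X) (g s) := by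
  funext i
  by_cases h : (i : ℕ) < k - 1 <;> simp [snoc', h]

theorem projZ_liftPt {d : ℕ} (p : Fin (d - 1) → ℝ) (z : ℝ) : projZ (liftPt p z) = p := by
  funext i
  simp [projZ, liftPt]

theorem liftPt_last {d : ℕ} (hd : 0 < d) (p : Fin (d - 1) → ℝ) (z : ℝ) :
    liftPt p z ⟨d - 1, by omega⟩ = z := by
  simp [liftPt]

theorem mdet_eq_det_liftPt {k : ℕ} (S : Fin k → (Fin (k - 1) → ℝ)) :
    mdet S = (Matrix.of fun j => liftPt (S j) 1).det := by
  rw [← det_transpose]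
  rfl

theorem pdet_snoc' {d : ℕ} (X : Fin (d - 1) → (Fin d → ℝ)) (s : Fin d → ℝ) :
    pdet (snoc' X s) = mdet (snoc' (projZ ∘ X) (projZ s)) := by
  rw [pdet, ← comp_snoc']
  rfl

noncomputable def homogenize {d : ℕ} (hd : 0 < d) (f : (Fin (d - 1) → ℝ) →ᵃ[ℝ] ℝ) :
    (Fin d → ℝ) →ₗ[ℝ] ℝ :=
  f.linear ∘ₗ LinearMap.funLeft ℝ ℝ (Fin.castLE (Nat.sub_le d 1)) +
    f 0 • LinearMap.proj ⟨d - 1, by omega⟩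

theorem homogenize_liftPt {d : ℕ} (hd : 0 < d) (f : (Fin (d - 1) → ℝ) →ᵃ[ℝ] ℝ)
    (p : Fin (d - 1) → ℝ) : homogenize hd f (liftPt p 1) = f p := by
  have hproj : LinearMap.funLeft ℝ ℝ (Fin.castLE (Nat.sub_le d 1)) (liftPt p 1) = p :=
    projZ_liftPt p 1
  have hf : f.linear p + f 0 = f p := by
    simpa using congrArg (· + f 0) (f.linearMap_vsub p 0)
  simpa [homogenize, hproj, liftPt_last hd] using hf

theorem Matrix.det_smul_map_eq_det_updateRow_smul {n R M : Type*} [Fintype n] [DecidableEq n]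
    [CommRing R] [AddCommGroup M] [Module R M] (A : Matrix n n R) (G : (n → R) →ₗ[R] M)
    (i : n) (hG : ∀ j ≠ i, G (A j) = 0) (b : n → R) :
    A.det • G b = (A.updateRow i b).det • G (A i) := by
  have h := congrArg G (mulVec_cramer Aᵀ b)
  rw [mulVec_transpose, vecMul_eq_sum, map_sum, map_smul, det_transpose,
    Finset.sum_eq_single i (fun j _ hj => by rw [map_smul, hG j hj, smul_zero])
      (by simp)] at h
  rw [← h, map_smul, cramer_transpose_apply]

theorem mdet_snoc'_mul_eq {d : ℕ} (hd : 0 < d) (Y : Fin (d - 1) → (Fin (d - 1) → ℝ))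
    (f : (Fin (d - 1) → ℝ) →ᵃ[ℝ] ℝ) (hf : ∀ j, f (Y j) = 0) (p q : Fin (d - 1) → ℝ) :
    mdet (snoc' Y p) * f q = mdet (snoc' Y q) * f p := by
  set last : Fin d := ⟨d - 1, by omega⟩
  have hrow : ∀ j ≠ last, homogenize hd f (liftPt (snoc' Y p j) 1) = 0 := fun j hj => by
    rw [snoc'_of_ne_last _ _ (fun h => hj (Fin.ext h)), homogenize_liftPt, hf]
  have hupdate : (Matrix.of fun j => liftPt (snoc' Y p j) 1).updateRow last (liftPt q 1) =
      Matrix.of fun j => liftPt (snoc' Y q j) 1 := by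
    ext j i
    by_cases hj : j = last
    · rw [hj, updateRow_self, of_apply, snoc'_last]
    · have hj' : (j : ℕ) ≠ d - 1 := fun h => hj (Fin.ext h)
      rw [updateRow_ne hj, of_apply, of_apply, snoc'_of_ne_last _ _ hj',
        snoc'_of_ne_last _ _ hj']
  have h := det_smul_map_eq_det_updateRow_smul (Matrix.of fun j => liftPt (snoc' Y p j) 1) _
    last hrow (liftPt q 1)
  have hlast : (Matrix.of fun j => liftPt (snoc' Y p j) 1) last = liftPt p 1 :=
    congrArg (liftPt · 1) (snoc'_last Y p _)
  rwa [hupdate, ← mdet_eq_det_liftPt, ← mdet_eq_det_liftPt, hlast, homogenize_liftPt,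
    homogenize_liftPt, smul_eq_mul, smul_eq_mul] at h

theorem stmt4_general {d : ℕ} (hd : 2 ≤ d) (X : Fin (d - 1) → (Fin d → ℝ)) (s t : Fin d → ℝ)
    (hS : pdet (snoc' X s) ≠ 0)
    (zS zT : (Fin (d - 1) → ℝ) →ᵃ[ℝ] ℝ)
    (hzS : ∀ i, zS (projZ (snoc' X s i)) = zc (snoc' X s i))
    (hzT : ∀ i, zT (projZ (snoc' X t i)) = zc (snoc' X t i))
    (s' : Fin d → ℝ)
    (hS' : pdet (snoc' X s') ≠ 0) :
    (zT (projZ s') - zS (projZ s')) / pdet (snoc' X s') =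
      (zT (projZ s) - zS (projZ s)) / pdet (snoc' X s) := by
  have hX : ∀ j, (zT - zS) ((projZ ∘ X) j) = 0 := fun j => by
    have hs := hzS (Fin.castLE (Nat.sub_le d 1) j)
    have ht := hzT (Fin.castLE (Nat.sub_le d 1) j)
    rw [snoc'_castLE] at hs ht
    rw [AffineMap.coe_sub, Pi.sub_apply, Function.comp_apply, hs, ht, sub_self]
  have key := mdet_snoc'_mul_eq (by omega) _ _ hX (projZ s) (projZ s')
  rw [← pdet_snoc', ← pdet_snoc', AffineMap.coe_sub, Pi.sub_apply, Pi.sub_apply] at key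
  rw [div_eq_div_iff hS' hS]
  linear_combination key

/-- Lemma 2(b): the creasing on `X` does not depend on the choice of the
point completing `S`: if `s'` lies on the hyperplane `h(S)` and `⟦X∘s'⟧ ≠ 0`, then
`(z_T(π(s')) − z_S(π(s')))/⟦X∘s'⟧ = (z_T(π(s)) − z_S(π(s)))/⟦S⟧`. -/
theorem stmt4 {d : ℕ} (hd : 2 ≤ d) (X : Fin (d - 1) → (Fin d → ℝ)) (s t : Fin d → ℝ)
    (hS : pdet (snoc' X s) ≠ 0) (hT : pdet (snoc' X t) ≠ 0)
    (zS zT : (Fin (d - 1) → ℝ) →ᵃ[ℝ] ℝ)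
    (hzS : ∀ i, zS (projZ (snoc' X s i)) = zc (snoc' X s i))
    (hzT : ∀ i, zT (projZ (snoc' X t i)) = zc (snoc' X t i))
    (s' : Fin d → ℝ)
    (hs' : zS (projZ s') = zc s')
    (hS' : pdet (snoc' X s') ≠ 0) :
    (zT (projZ s') - zS (projZ s')) / pdet (snoc' X s') =
      (zT (projZ s) - zS (projZ s)) / pdet (snoc' X s) :=
  stmt4_general hd X s t hS zS zT hzS hzT s' hS'
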